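/- arXiv:1210.3790 — 4 statements merged into one kernel-verified Lean document; each statement's English description precedes it below -/
import Mathlib

section
/- Let G be a special 2-group. Then the map q : G/Z(G) → Z(G) given by q(xZ(G)) = x² is a well-defined quadratic map between F_2-vector spaces, and its polar map satisfies b_q(xZ(G), yZ(G)) = [x,y] = xyx⁻¹y⁻¹ for all x, y ∈ G. -/
/-!
When `G' ≤ Z(G)` the commutator is bilinear, so if moreover `Z(G)` has exponent `2` then
`⁅x², y⁆ = ⁅x, y⁆² = 1`: squares are central. Once `x²` is central, `(xy)² x⁻² y⁻² = ⁅x, y⁆` is a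
rearrangement, and squaring is constant on cosets of `Z(G)` because `(xz)² = x² z² = x²` for
central `z`.
-/

/-- A finite `2`-group `G` is a special `2`-group if it is non-abelian and
`G' = Φ(G) = Z(G) = Ω(Z(G))`. -/
def IsSpecial2Group (G : Type*) [Group G] : Prop :=
  IsPGroup 2 G ∧ (∃ x y : G, x * y ≠ y * x) ∧
    commutator G = frattini G ∧ frattini G = Subgroup.center G ∧
    Subgroup.center G = Subgroup.closure {x : G | x ∈ Subgroup.center G ∧ x ^ 2 = 1}

open Subgroup
open scoped commutatorElement

section ClassTwo

variable {G : Type*} [Group G]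

theorem sq_eq_one_of_mem_closure {S : Set G} (hS : ∀ s ∈ S, s ∈ center G ∧ s ^ 2 = 1)
    {z : G} (hz : z ∈ closure S) : z ^ 2 = 1 := by
  have hS_center : closure S ≤ center G := (closure_le _).mpr fun s hs => (hS s hs).1
  induction hz using closure_induction with
  | mem s hs => exact (hS s hs).2
  | one => exact one_pow 2
  | mul a b ha hb ha2 hb2 =>
    have hab : Commute a b := (mem_center_iff.mp (hS_center ha) b).symm
    rw [hab.mul_pow, ha2, hb2, one_mul]
  | inv a _ ha2 => rw [inv_pow, ha2, inv_one]

variable (hG : commutator G ≤ center G)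
include hG

theorem commutatorElement_mem_center (x y : G) : ⁅x, y⁆ ∈ center G :=
  hG (commutator_mem_commutator (mem_top x) (mem_top y))

theorem commutatorElement_mul_left_of_commutator_le_center (x y z : G) :
    ⁅x * y, z⁆ = ⁅x, z⁆ * ⁅y, z⁆ := by
  have hyz := mem_center_iff.mp (commutatorElement_mem_center hG y z)
  rw [commutatorElement_mul_left_eq_conj_mul, hyz x, mul_inv_cancel_right, hyz]

theorem commutatorElement_mul_right_of_commutator_le_center (x y z : G) :
    ⁅x, y * z⁆ = ⁅x, y⁆ * ⁅x, z⁆ := by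
  have hxz := mem_center_iff.mp (commutatorElement_mem_center hG x z)
  rw [commutatorElement_mul_right_eq_mul_conj, mul_assoc _ y, hxz y, ← mul_assoc,
    mul_inv_cancel_right]

theorem sq_mem_center_of_commutator_le_center (hZ : ∀ z ∈ center G, z ^ 2 = 1) (x : G) :
    x ^ 2 ∈ center G := by
  refine mem_center_iff.mpr fun y => (commutatorElement_eq_one_iff_mul_comm.mp ?_).symm
  rw [sq, commutatorElement_mul_left_of_commutator_le_center hG, ← sq,
    hZ _ (commutatorElement_mem_center hG x y)]

end ClassTwo

theorem mul_sq_mul_inv_sq_mul_inv_sq {G : Type*} [Group G] {x y : G} (h : Commute (x ^ 2) y) :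
    (x * y) ^ 2 * (x ^ 2)⁻¹ * (y ^ 2)⁻¹ = ⁅x, y⁆ := by
  have h' : y * (x ^ 2)⁻¹ = (x ^ 2)⁻¹ * y := h.inv_left.eq.symm
  calc (x * y) ^ 2 * (x ^ 2)⁻¹ * (y ^ 2)⁻¹
      = x * y * x * (y * (x ^ 2)⁻¹) * (y ^ 2)⁻¹ := by rw [sq (x * y)]; group
    _ = x * y * x * ((x ^ 2)⁻¹ * y) * (y ^ 2)⁻¹ := by rw [h']
    _ = ⁅x, y⁆ := by rw [commutatorElement_def]; group

theorem sq_eq_sq_of_mk_center_eq {G : Type*} [Group G] (hZ : ∀ z ∈ center G, z ^ 2 = 1)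
    {x y : G} (hxy : (x : G ⧸ center G) = y) : x ^ 2 = y ^ 2 := by
  have hz : x⁻¹ * y ∈ center G := QuotientGroup.eq.mp hxy
  rw [← mul_inv_cancel_left x y, Commute.mul_pow (mem_center_iff.mp hz x), hZ _ hz, mul_one]

theorem special2Group_squaring_quadraticMap_general
    (G : Type*) [Group G] (hG : IsSpecial2Group G) :
    (∀ x : G, x ^ 2 ∈ Subgroup.center G) ∧
    (∀ x : G, (x ^ 2) ^ 2 = 1) ∧
    (∀ x y : G, (x : G ⧸ Subgroup.center G) = (y : G ⧸ Subgroup.center G) →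
      x ^ 2 = y ^ 2) ∧
    (∀ x y : G, (x * y) ^ 2 * (x ^ 2)⁻¹ * (y ^ 2)⁻¹ = x * y * x⁻¹ * y⁻¹) ∧
    (∀ x y z : G, (x * y) * z * (x * y)⁻¹ * z⁻¹ =
      (x * z * x⁻¹ * z⁻¹) * (y * z * y⁻¹ * z⁻¹)) ∧
    (∀ x y z : G, x * (y * z) * x⁻¹ * (y * z)⁻¹ =
      (x * y * x⁻¹ * y⁻¹) * (x * z * x⁻¹ * z⁻¹)) := by
  obtain ⟨-, -, hCF, hFZ, hZΩ⟩ := hG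
  have hcomm : commutator G ≤ center G := (hCF.trans hFZ).le
  have hZ : ∀ z ∈ center G, z ^ 2 = 1 := fun z hz =>
    sq_eq_one_of_mem_closure (fun _ hs => hs) (hZΩ ▸ hz)
  have hsq := sq_mem_center_of_commutator_le_center hcomm hZ
  exact ⟨hsq, fun x => hZ _ (hsq x), fun x y => sq_eq_sq_of_mk_center_eq hZ,
    fun x y => mul_sq_mul_inv_sq_mul_inv_sq (mem_center_iff.mp (hsq x) y).symm,
    commutatorElement_mul_left_of_commutator_le_center hcomm,
    commutatorElement_mul_right_of_commutator_le_center hcomm⟩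

/-- For a special `2`-group `G`, squaring induces a well-defined quadratic map
`q : G/Z(G) → Z(G)`, `xZ(G) ↦ x²` (both groups being elementary abelian `2`-groups,
i.e. `F₂`-vector spaces), whose polar map is the commutator:
`b_q(xZ(G), yZ(G)) = xyx⁻¹y⁻¹`.  Written multiplicatively this says: squares are
central and again square to `1`, squaring is constant on cosets of the center, the
"polar map" `b_q(x,y) = q(xy)q(x)⁻¹q(y)⁻¹` equals the commutator `xyx⁻¹y⁻¹`, and
the commutator map is bilinear. -/
theorem special2Group_squaring_quadraticMap
    (G : Type*) [Group G] [Finite G] (hG : IsSpecial2Group G) :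
    (∀ x : G, x ^ 2 ∈ Subgroup.center G) ∧
    (∀ x : G, (x ^ 2) ^ 2 = 1) ∧
    (∀ x y : G, (x : G ⧸ Subgroup.center G) = (y : G ⧸ Subgroup.center G) →
      x ^ 2 = y ^ 2) ∧
    (∀ x y : G, (x * y) ^ 2 * (x ^ 2)⁻¹ * (y ^ 2)⁻¹ = x * y * x⁻¹ * y⁻¹) ∧
    (∀ x y z : G, (x * y) * z * (x * y)⁻¹ * z⁻¹ =
      (x * z * x⁻¹ * z⁻¹) * (y * z * y⁻¹ * z⁻¹)) ∧
    (∀ x y z : G, x * (y * z) * x⁻¹ * (y * z)⁻¹ =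
      (x * y * x⁻¹ * y⁻¹) * (x * z * x⁻¹ * z⁻¹)) :=
  special2Group_squaring_quadraticMap_general G hG
end

section
/- Let q : V → W be a quadratic map of F_2-vector spaces associated to a special 2-group G via the cocycle construction (G = V ×̇ W with multiplication (v,w)(v',w') = (v+v', c(v,v') + w + w'), where q(x) = c(x,x)). Then G is strongly real if and only if for every nonzero v ∈ V there exists a ∈ V with a ≠ v and q(a) = q(a − v) = 0. -/
/-!
In the twisted product `(v, w) * (v', w') = (v + v', c v v' + w + w')` the square of `(a, w)` is
`(0, c a a) = (0, q a)`, so the elements of square one are exactly those lying over the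
`q`-singular vectors. Since `(a, 0) * (a + v, c a (a + v) + w) = (v, w)`, the element `(v, w)` is
a product of two such elements iff `v = a + (a + v)` with both summands singular, independently
of `w`.
-/

open ZModModule

section TwistedProduct

variable {V W : Type*} [AddCommGroup V] [Module (ZMod 2) V] [AddCommGroup W] [Module (ZMod 2) W]
  {c : V → V → W} {mul : V × W → V × W → V × W}

theorem twistedMul_self_eq_zero_iff
    (hmul : ∀ p p' : V × W, mul p p' = (p.1 + p'.1, c p.1 p'.1 + p.2 + p'.2)) (p : V × W) :
    mul p p = (0, 0) ↔ c p.1 p.1 = 0 := by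
  simp [hmul, add_self, add_assoc]

theorem twistedMul_eq_of_fst
    (hmul : ∀ p p' : V × W, mul p p' = (p.1 + p'.1, c p.1 p'.1 + p.2 + p'.2))
    (p : V × W) (a : V) : mul (a, 0) (a + p.1, c a (a + p.1) + p.2) = p := by
  rw [hmul]
  ext <;> simp only [add_zero, ← add_assoc, add_self, zero_add]

theorem exists_twistedMul_self_eq_zero_iff
    (hmul : ∀ p p' : V × W, mul p p' = (p.1 + p'.1, c p.1 p'.1 + p.2 + p'.2)) (p : V × W) :
    (∃ y z : V × W, mul y y = (0, 0) ∧ mul z z = (0, 0) ∧ p = mul y z) ↔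
      ∃ a : V, c a a = 0 ∧ c (a + p.1) (a + p.1) = 0 := by
  simp only [twistedMul_self_eq_zero_iff hmul]
  constructor
  · rintro ⟨y, z, hy, hz, rfl⟩
    refine ⟨y.1, hy, ?_⟩
    rwa [hmul, ← add_assoc, add_self, zero_add]
  · rintro ⟨a, ha, hav⟩
    exact ⟨(a, 0), _, ha, hav, (twistedMul_eq_of_fst hmul p a).symm⟩

end TwistedProduct

theorem exists_ne_and_sub_iff_exists_add {V W : Type*} [AddCommGroup V] [Module (ZMod 2) V]
    [Zero W] {q : V → W} (hq0 : q 0 = 0) {v : V} (hv : v ≠ 0) :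
    (∃ a, a ≠ v ∧ q a = 0 ∧ q (a - v) = 0) ↔ ∃ a, q a = 0 ∧ q (a + v) = 0 := by
  simp only [sub_eq_add]
  constructor
  · rintro ⟨a, -, ha⟩
    exact ⟨a, ha⟩
  · rintro ⟨a, ha, hav⟩
    by_cases h : a = v
    · subst h
      exact ⟨0, hv.symm, hq0, by rwa [zero_add]⟩
    · exact ⟨a, h, ha, hav⟩

theorem special2Group_stronglyReal_iff_general
    (V W : Type*) [AddCommGroup V] [Module (ZMod 2) V]
    [AddCommGroup W] [Module (ZMod 2) W]
    (c : V → V → W)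
    (hnorm : ∀ v : V, c v 0 = 0 ∧ c 0 v = 0)
    (q : V → W) (hq : ∀ v, q v = c v v)
    (mul : V × W → V × W → V × W)
    (hmul : ∀ p p' : V × W, mul p p' = (p.1 + p'.1, c p.1 p'.1 + p.2 + p'.2)) :
    (∀ p : V × W, ∃ y z : V × W, mul y y = (0, 0) ∧ mul z z = (0, 0) ∧ p = mul y z) ↔
      (∀ v : V, v ≠ 0 → ∃ a : V, a ≠ v ∧ q a = 0 ∧ q (a - v) = 0) := by
  have hq0 : q 0 = 0 := (hq 0).trans (hnorm 0).1
  simp only [exists_twistedMul_self_eq_zero_iff hmul, ← hq]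
  constructor
  · intro h v hv
    exact (exists_ne_and_sub_iff_exists_add hq0 hv).2 (h (v, 0))
  · intro h p
    by_cases hv : p.1 = 0
    · exact ⟨0, hq0, by rw [hv, add_zero, hq0]⟩
    · exact (exists_ne_and_sub_iff_exists_add hq0 hv).1 (h p.1 hv)

/-- Strong reality criterion for special `2`-groups: let `q : V → W` be a regular
quadratic map of finite-dimensional `F₂`-vector spaces whose polar form generates `W`,
arising as the diagonal of a normal `2`-cocycle `c`, and let `G` be the special
`2`-group on `V × W` with multiplication `(v,w)(v',w') = (v+v', c(v,v') + w + w')`.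
Then `G` is strongly real (every element is a product of two elements of square one)
iff for every nonzero `v ∈ V` there is `a ∈ V` with `a ≠ v` and `q(a) = q(a - v) = 0`. -/
theorem special2Group_stronglyReal_iff
    (V W : Type*) [AddCommGroup V] [Module (ZMod 2) V] [Module.Finite (ZMod 2) V]
    [AddCommGroup W] [Module (ZMod 2) W] [Module.Finite (ZMod 2) W]
    (c : V → V → W)
    (hcoc : ∀ v₁ v₂ v₃ : V,
      c v₂ v₃ - c (v₁ + v₂) v₃ + c v₁ (v₂ + v₃) - c v₁ v₂ = 0)
    (hnorm : ∀ v : V, c v 0 = 0 ∧ c 0 v = 0)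
    (q : V → W) (hq : ∀ v, q v = c v v)
    (b : V → V → W) (hb : ∀ v w, b v w = q (v + w) - q v - q w)
    (hreg : ∀ v : V, (∀ u : V, b u v = 0) → v = 0)
    (hgen : Submodule.span (ZMod 2) {w : W | ∃ u v : V, w = b u v} = ⊤)
    (mul : V × W → V × W → V × W)
    (hmul : ∀ p p' : V × W, mul p p' = (p.1 + p'.1, c p.1 p'.1 + p.2 + p'.2)) :
    (∀ p : V × W, ∃ y z : V × W, mul y y = (0, 0) ∧ mul z z = (0, 0) ∧ p = mul y z) ↔
      (∀ v : V, v ≠ 0 → ∃ a : V, a ≠ v ∧ q a = 0 ∧ q (a - v) = 0) :=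
  special2Group_stronglyReal_iff_general V W c hnorm q hq mul hmul
end

section
/- The quadratic map q : F_2³ → F_2² given by q(x,y,z) = (x² + xy + y², xz) is isotropic (e.g. q(0,0,1) = (0,0)), but fails the strong reality criterion: for v = (1,1,1) there is no a ∈ F_2³ with q(a) = q(a − v) = (0,0). -/
/-! The first coordinate `x² + xy + y²` of `q` is the norm form of `𝔽₄ / 𝔽₂`, which is
anisotropic because `t² + t + 1` has no root in `𝔽₂`. So `q a = 0` forces the first two
coordinates of `a` to vanish, and then those of `a - (1,1,1)` are `(1,1)`. -/

theorem sq_add_mul_add_sq_eq_zero_iff {F : Type*} [Field F]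
    (hroot : ∀ t : F, t ^ 2 + t + 1 ≠ 0) {x y : F} :
    x ^ 2 + x * y + y ^ 2 = 0 ↔ x = 0 ∧ y = 0 := by
  refine ⟨fun h => ?_, by rintro ⟨rfl, rfl⟩; ring⟩
  by_cases hy : y = 0
  · subst hy
    exact ⟨pow_eq_zero_iff two_ne_zero |>.mp (by simpa using h), rfl⟩
  · refine absurd ?_ (hroot (x / y))
    calc (x / y) ^ 2 + x / y + 1 = (x ^ 2 + x * y + y ^ 2) / y ^ 2 := by field_simp
      _ = 0 := by rw [h, zero_div]

theorem sq_add_add_one_ne_zero_zmod_two (t : ZMod 2) : t ^ 2 + t + 1 ≠ 0 := by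
  fin_cases t <;> decide

/-- The quadratic map `q : F₂³ → F₂²`, `q(x,y,z) = (x² + xy + y², xz)`, is isotropic
(`q(0,0,1) = (0,0)`), yet fails the strong reality criterion: for `v = (1,1,1)` there
is no `a` with `q(a) = q(a - v) = (0,0)`. -/
theorem isotropic_but_not_stronglyReal_criterion
    (q : ZMod 2 × ZMod 2 × ZMod 2 → ZMod 2 × ZMod 2)
    (hq : ∀ v : ZMod 2 × ZMod 2 × ZMod 2,
      q v = (v.1 ^ 2 + v.1 * v.2.1 + v.2.1 ^ 2, v.1 * v.2.2)) :
    ((0, 0, 1) : ZMod 2 × ZMod 2 × ZMod 2) ≠ 0 ∧ q (0, 0, 1) = (0, 0) ∧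
      ¬ ∃ a : ZMod 2 × ZMod 2 × ZMod 2, q a = (0, 0) ∧ q (a - (1, 1, 1)) = (0, 0) := by
  refine ⟨by decide, by simp [hq], ?_⟩
  rintro ⟨a, ha, hav⟩
  rw [hq, Prod.mk.injEq] at ha hav
  have ha₁ : a.1 = 0 :=
    ((sq_add_mul_add_sq_eq_zero_iff sq_add_add_one_ne_zero_zmod_two).mp ha.1).1
  have hav₁ : a.1 - 1 = 0 :=
    ((sq_add_mul_add_sq_eq_zero_iff sq_add_add_one_ne_zero_zmod_two).mp hav.1).1
  rw [ha₁, zero_sub, neg_eq_zero] at hav₁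
  exact one_ne_zero hav₁
end

section
/- Every extraspecial 2-group other than Q₈ is strongly real. In particular D₄ is strongly real, the central product Q₈ ∘ D₄ is strongly real, and Q₈ itself is not strongly real (its unique element of order 2 is central). -/
/-- Extraspecial `2`-group: a special `2`-group whose center has order `2`. -/
def IsExtraspecial2Group (G : Type*) [Group G] : Prop :=
  IsSpecial2Group G ∧ Nat.card (Subgroup.center G) = 2

/-- A group is strongly real if every element is inverted by an involution. -/
def IsStronglyReal (G : Type*) [Group G] : Prop :=
  ∀ x : G, ∃ y : G, y * y = 1 ∧ y * x * y⁻¹ = x⁻¹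

/-! In an extraspecial `2`-group `G` with centre `{1, z}`, squares and commutators are central.
If `x² = 1`, `x` inverts itself. Otherwise `x² = z`, and `g` inverts `x` exactly when
`⁅g, x⁆ = z`, i.e. when `g ∉ C(x)`; pick such an `a`. If no inverter of `x` were an involution,
every `a c` with `c ∈ C(x)` would square to `z`, and `(a c)² = ⁅c, a⁆ a² c²` gives
`c² = ⁅c, a⁆`. Comparing `(c d)² = ⁅d, c⁆ c² d²` with `⁅c d, a⁆ = ⁅c, a⁆ ⁅d, a⁆` then shows that
`C(x)` is abelian, so `C(x) ∩ C(a) = Z(G)` and `G = ⟨x, a⟩` with `x⁴ = 1`, `a² = x²` and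
`a x a⁻¹ = x⁻¹`: `G ≅ Q₈`. The three small groups are settled by computation. -/

open Subgroup
open scoped commutatorElement

theorem IsPGroup.pow_mem_of_isCoatom {G : Type*} [Group G] [Finite G] {p : ℕ} [hp : Fact p.Prime]
    (hG : IsPGroup p G) {M : Subgroup G} (hM : IsCoatom M) (g : G) : g ^ p ∈ M := by
  have := hG.isNilpotent
  have : M.Normal := Group.normalizerCondition_of_isNilpotent.normal_of_coatom M hM
  -- `G ⧸ M` has no subgroups but `⊥` and `⊤`, so an element of order `p` generates it.
  have : IsSimpleOrder (Subgroup (G ⧸ M)) :=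
    (OrderIso.isSimpleOrder_iff (β := Set.Ici M) (QuotientGroup.comapMk'OrderIso M)).mpr
      (Set.isSimpleOrder_Ici_iff_isCoatom.mpr hM)
  obtain ⟨n, hn, hcard⟩ := (hG.to_quotient M).nontrivial_iff_card.mp
    (Subgroup.nontrivial_iff.mp inferInstance)
  obtain ⟨c, hc⟩ := exists_prime_orderOf_dvd_card' (G := G ⧸ M) p (hcard ▸ dvd_pow_self p hn.ne')
  have hc1 : c ≠ 1 := by rintro rfl; exact hp.out.ne_one (orderOf_one.symm.trans hc).symm
  have hcard : Nat.card (G ⧸ M) = p := by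
    rw [← hc, ← Nat.card_zpowers, ((IsSimpleOrder.eq_bot_or_eq_top (zpowers c)).resolve_left
      (zpowers_ne_bot.mpr hc1)), Subgroup.card_top]
  rw [← QuotientGroup.eq_one_iff, QuotientGroup.mk_pow, ← hcard, pow_card_eq_one']

theorem IsPGroup.pow_mem_frattini {G : Type*} [Group G] [Finite G] {p : ℕ} [Fact p.Prime]
    (hG : IsPGroup p G) (g : G) : g ^ p ∈ frattini G := by
  simp only [frattini, Order.radical, Subgroup.mem_iInf]
  exact fun M hM => hG.pow_mem_of_isCoatom hM g

section

variable {G : Type*} [Group G]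

theorem commutatorElement_mul_left_of_mem_center {a b c : G} (h : ⁅b, c⁆ ∈ center G) :
    ⁅a * b, c⁆ = ⁅a, c⁆ * ⁅b, c⁆ := by
  rw [commutatorElement_mul_left_eq_conj_mul, mem_center_iff.mp h a, mul_inv_cancel_right,
    mem_center_iff.mp h]

theorem mul_sq_of_commutatorElement_mem_center {g h : G} (hc : ⁅h, g⁆ ∈ center G) :
    (g * h) ^ 2 = ⁅h, g⁆ * g ^ 2 * h ^ 2 := by
  have hhg : h * g = ⁅h, g⁆ * (g * h) := by rw [commutatorElement_def]; group
  calc (g * h) ^ 2 = g * (h * g) * h := by simp only [sq, mul_assoc]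
    _ = (g * ⁅h, g⁆) * (g * h) * h := by rw [hhg]; simp only [mul_assoc]
    _ = ⁅h, g⁆ * g ^ 2 * h ^ 2 := by rw [mem_center_iff.mp hc g]; simp only [sq, mul_assoc]

theorem Subgroup.eq_of_ne_one_of_card_eq_two {H : Subgroup G} (hH : Nat.card H = 2) {u v : G}
    (hu : u ∈ H) (hv : v ∈ H) (hu1 : u ≠ 1) (hv1 : v ≠ 1) : u = v := by
  obtain ⟨w, -, hw⟩ := (Nat.card_eq_two_iff' (1 : H)).mp hH
  have key (y : G) (hy : y ∈ H) (hy1 : y ≠ 1) : (⟨y, hy⟩ : H) = w :=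
    hw _ fun h => hy1 (congrArg Subtype.val h)
  exact congrArg Subtype.val ((key u hu hu1).trans (key v hv hv1).symm)

theorem Subgroup.sq_eq_one_of_card_eq_two {H : Subgroup G} (hH : Nat.card H = 2) {u : G}
    (hu : u ∈ H) : u ^ 2 = 1 := by
  have h := congrArg Subtype.val (pow_card_eq_one' (x := (⟨u, hu⟩ : H)))
  rwa [hH, Subgroup.coe_pow, Subgroup.coe_one] at h

end

section

variable {G : Type*} [Group G] {k : ℕ} [NeZero k] {r s : G}

theorem pow_zmod_val_add (hr : r ^ k = 1) (i j : ZMod k) :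
    r ^ (i + j).val = r ^ i.val * r ^ j.val := by
  rw [ZMod.val_add, ← pow_add]
  conv_rhs => rw [← Nat.mod_add_div (i.val + j.val) k, pow_add, pow_mul, hr, one_pow, mul_one]

theorem pow_zmod_val_sub (hr : r ^ k = 1) (i j : ZMod k) :
    r ^ (i - j).val = r ^ i.val * (r ^ j.val)⁻¹ := by
  rw [eq_mul_inv_iff_mul_eq, ← pow_zmod_val_add hr, sub_add_cancel]

theorem pow_mul_of_conj_eq_inv (hsr : s * r * s⁻¹ = r⁻¹) (m : ℕ) :
    r ^ m * s = s * (r ^ m)⁻¹ := by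
  have h : s * r ^ m * s⁻¹ = (r ^ m)⁻¹ := by rw [← conj_pow, hsr, inv_pow]
  calc r ^ m * s = (s * r ^ m * s⁻¹)⁻¹ * s := by rw [h, inv_inv]
    _ = s * (r ^ m)⁻¹ := by group

end

namespace QuaternionGroup

variable {G : Type*} [Group G] {n : ℕ} [NeZero n]

def lift (r s : G) (hr : r ^ (2 * n) = 1) (hs : s ^ 2 = r ^ n) (hsr : s * r * s⁻¹ = r⁻¹) :
    QuaternionGroup n →* G where
  toFun
    | a i => r ^ i.val
    | xa i => s * r ^ i.val
  map_one' := show r ^ (0 : ZMod (2 * n)).val = 1 by simp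
  map_mul' := by
    have hcomm (i j : ZMod (2 * n)) : Commute (r ^ i.val) (r ^ j.val) := Commute.pow_pow_self r _ _
    rintro (i | i) (j | j)
    · exact pow_zmod_val_add hr i j
    · show s * r ^ (j - i).val = r ^ i.val * (s * r ^ j.val)
      rw [pow_zmod_val_sub hr, ← mul_assoc (r ^ i.val), pow_mul_of_conj_eq_inv hsr, mul_assoc,
        (hcomm j i).inv_right.eq]
    · show s * r ^ (i + j).val = s * r ^ i.val * r ^ j.val
      rw [pow_zmod_val_add hr, mul_assoc]
    · show r ^ (n + j - i : ZMod (2 * n)).val = s * r ^ i.val * (s * r ^ j.val)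
      have hn : (n : ZMod (2 * n)).val = n :=
        ZMod.val_natCast_of_lt (by have := NeZero.pos n; omega)
      rw [pow_zmod_val_sub hr, pow_zmod_val_add hr, hn, ← hs, mul_assoc s, ← mul_assoc _ s,
        pow_mul_of_conj_eq_inv hsr, sq]
      simp only [mul_assoc, (hcomm j i).inv_right.eq]

theorem eq_one_or_eq_a_two_or_sq_eq_a_two (q : QuaternionGroup 2) :
    q = 1 ∨ q = a 2 ∨ q ^ 2 = a 2 := by
  revert q; decide

theorem injective_of_map_a_two_ne_one {f : QuaternionGroup 2 →* G} (hf : f (a 2) ≠ 1) :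
    Function.Injective f := by
  refine (injective_iff_map_eq_one f).mpr fun q hq => ?_
  rcases eq_one_or_eq_a_two_or_sq_eq_a_two q with h | h | h
  · exact h
  · exact absurd (h ▸ hq) hf
  · exact absurd (by rw [← h, map_pow, hq, one_pow]) hf

end QuaternionGroup

namespace IsExtraspecial2Group

variable {G : Type*} [Group G] {x a : G}

theorem commutatorElement_mem_center (hE : IsExtraspecial2Group G) (g h : G) :
    ⁅g, h⁆ ∈ center G := by
  obtain ⟨⟨-, -, hcomm, hfrat, -⟩, -⟩ := hE
  rw [← hfrat, ← hcomm]
  exact commutator_mem_commutator (mem_top g) (mem_top h)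

theorem sq_mem_center [Finite G] (hE : IsExtraspecial2Group G) (g : G) : g ^ 2 ∈ center G := by
  obtain ⟨⟨h2, -, -, hfrat, -⟩, -⟩ := hE
  have : Fact (Nat.Prime 2) := ⟨Nat.prime_two⟩
  exact hfrat ▸ h2.pow_mem_frattini g

theorem eq_of_mem_center (hE : IsExtraspecial2Group G) {u v : G} (hu : u ∈ center G)
    (hv : v ∈ center G) (hu1 : u ≠ 1) (hv1 : v ≠ 1) : u = v :=
  eq_of_ne_one_of_card_eq_two hE.2 hu hv hu1 hv1

theorem conj_eq_inv_iff_not_commute [Finite G] (hE : IsExtraspecial2Group G)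
    (hx : x ^ 2 ≠ 1) (g : G) : g * x * g⁻¹ = x⁻¹ ↔ ¬ Commute g x := by
  have hx2 : x⁻¹ * x⁻¹ = x ^ 2 := by
    rw [← mul_inv_rev, ← sq, inv_eq_iff_mul_eq_one, ← sq,
      sq_eq_one_of_card_eq_two hE.2 (hE.sq_mem_center x)]
  have hconj : g * x * g⁻¹ = x⁻¹ ↔ ⁅g, x⁆ = x ^ 2 := by
    rw [commutatorElement_def, ← hx2, mul_left_inj]
  rw [hconj, ← commutatorElement_eq_one_iff_commute]
  exact ⟨fun h h1 => hx (h ▸ h1), fun h1 => hE.eq_of_mem_center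
    (hE.commutatorElement_mem_center g x) (hE.sq_mem_center x) h1 hx⟩

theorem commute_or_commute_mul (hE : IsExtraspecial2Group G) {u v : G} (huv : ¬ Commute u v)
    (g : G) : Commute g v ∨ Commute (g * u) v := by
  simp only [← commutatorElement_eq_one_iff_commute] at huv ⊢
  rw [or_iff_not_imp_left, commutatorElement_mul_left_of_mem_center
    (hE.commutatorElement_mem_center u v)]
  intro hg
  rw [hE.eq_of_mem_center (hE.commutatorElement_mem_center g v)
    (hE.commutatorElement_mem_center u v) hg huv, ← sq,
    sq_eq_one_of_card_eq_two hE.2 (hE.commutatorElement_mem_center u v)]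

theorem commutatorElement_eq_sq [Finite G] (hE : IsExtraspecial2Group G)
    (hax : ¬ Commute a x) (hsq : ∀ g, ¬ Commute g x → g ^ 2 = x ^ 2)
    {c : G} (hc : Commute c x) : ⁅c, a⁆ = c ^ 2 := by
  have hac : ¬ Commute (a * c) x := fun h => hax (by simpa using h.mul_left hc.inv_left)
  have h := mul_sq_of_commutatorElement_mem_center (hE.commutatorElement_mem_center c a)
  rw [hsq _ hac, hsq _ hax, mem_center_iff.mp (hE.sq_mem_center x), mul_assoc,
    left_eq_mul, mul_eq_one_iff_eq_inv] at h
  rw [h, inv_eq_iff_mul_eq_one, ← sq, sq_eq_one_of_card_eq_two hE.2 (hE.sq_mem_center c)]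

theorem commute_of_commute_of_commute [Finite G] (hE : IsExtraspecial2Group G)
    (hax : ¬ Commute a x) (hsq : ∀ g, ¬ Commute g x → g ^ 2 = x ^ 2)
    {c d : G} (hc : Commute c x) (hd : Commute d x) : Commute c d := by
  have h := mul_sq_of_commutatorElement_mem_center (hE.commutatorElement_mem_center d c)
  rw [← hE.commutatorElement_eq_sq hax hsq (hc.mul_left hd),
    commutatorElement_mul_left_of_mem_center (hE.commutatorElement_mem_center d a),
    hE.commutatorElement_eq_sq hax hsq hc, hE.commutatorElement_eq_sq hax hsq hd, mul_assoc,
    right_eq_mul, commutatorElement_eq_one_iff_commute] at h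
  exact h.symm

theorem mem_center_of_commute_of_commute [Finite G] (hE : IsExtraspecial2Group G)
    (hax : ¬ Commute a x) (hsq : ∀ g, ¬ Commute g x → g ^ 2 = x ^ 2)
    {c : G} (hcx : Commute c x) (hca : Commute c a) : c ∈ center G := by
  refine mem_center_iff.mpr fun g => ?_
  rcases hE.commute_or_commute_mul hax g with hg | hga
  · exact hE.commute_of_commute_of_commute hax hsq hg hcx
  · simpa using ((hE.commute_of_commute_of_commute hax hsq hga hcx).mul_left hca.symm.inv_left).eq

theorem closure_pair_eq_top [Finite G] (hE : IsExtraspecial2Group G)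
    (hax : ¬ Commute a x) (hsq : ∀ g, ¬ Commute g x → g ^ 2 = x ^ 2) :
    closure {x, a} = ⊤ := by
  set H := closure {x, a}
  have hx : x ∈ H := subset_closure (by simp)
  have ha : a ∈ H := subset_closure (by simp)
  have hcenter : center G ≤ H := by
    intro w hw
    by_cases hw1 : w = 1
    · exact hw1 ▸ H.one_mem
    have hwax : w = ⁅a, x⁆ := hE.eq_of_mem_center hw (hE.commutatorElement_mem_center a x) hw1
      (mt commutatorElement_eq_one_iff_commute.mp hax)
    rw [hwax, commutatorElement_def]
    exact H.mul_mem (H.mul_mem (H.mul_mem ha hx) (H.inv_mem ha)) (H.inv_mem hx)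
  have hcentralizer {c : G} (hc : Commute c x) : c ∈ H := by
    rcases hE.commute_or_commute_mul (fun h => hax h.symm) c with hca | hcxa
    · exact hcenter (hE.mem_center_of_commute_of_commute hax hsq hc hca)
    · have := hcenter
        (hE.mem_center_of_commute_of_commute hax hsq (hc.mul_left (Commute.refl x)) hcxa)
      simpa using H.mul_mem this (H.inv_mem hx)
  refine eq_top_iff.mpr fun g _ => ?_
  rcases hE.commute_or_commute_mul hax g with hg | hga
  · exact hcentralizer hg
  · simpa using H.mul_mem (hcentralizer hga) (H.inv_mem ha)

theorem nonempty_mulEquiv_quaternionGroup [Finite G] (hE : IsExtraspecial2Group G)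
    (hx : x ^ 2 ≠ 1) (hax : ¬ Commute a x) (hsq : ∀ g, ¬ Commute g x → g ^ 2 = x ^ 2) :
    Nonempty (G ≃* QuaternionGroup 2) := by
  have hx4 : x ^ (2 * 2) = 1 := by
    rw [pow_mul, sq_eq_one_of_card_eq_two hE.2 (hE.sq_mem_center x)]
  let F := QuaternionGroup.lift x a hx4 (hsq a hax) ((hE.conj_eq_inv_iff_not_commute hx a).mpr hax)
  have hinj : Function.Injective F := QuaternionGroup.injective_of_map_a_two_ne_one hx
  have hsurj : Function.Surjective F := by
    rw [← MonoidHom.range_eq_top, eq_top_iff, ← hE.closure_pair_eq_top hax hsq, closure_le]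
    rw [Set.insert_subset_iff, Set.singleton_subset_iff]
    exact ⟨⟨QuaternionGroup.a 1, pow_one x⟩,
      ⟨QuaternionGroup.xa 0, show a * x ^ (0 : ZMod (2 * 2)).val = a by simp⟩⟩
  exact ⟨(MulEquiv.ofBijective F ⟨hinj, hsurj⟩).symm⟩

theorem isStronglyReal [Finite G] (hE : IsExtraspecial2Group G)
    (hQ : ¬ Nonempty (G ≃* QuaternionGroup 2)) : IsStronglyReal G := by
  intro x
  by_cases hx : x ^ 2 = 1
  · rw [sq] at hx
    exact ⟨x, hx, by rw [mul_inv_cancel_right]; exact eq_inv_of_mul_eq_one_left hx⟩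
  obtain ⟨a, hax⟩ : ∃ a, ¬ Commute a x := by
    by_contra! h
    exact hx (sq_eq_one_of_card_eq_two hE.2 (mem_center_iff.mpr fun g => (h g).eq))
  by_contra! hinv
  refine hQ (hE.nonempty_mulEquiv_quaternionGroup hx hax fun g hg => ?_)
  refine hE.eq_of_mem_center (hE.sq_mem_center g) (hE.sq_mem_center x) (fun hg2 => ?_) hx
  exact hinv g (by rwa [← sq]) ((hE.conj_eq_inv_iff_not_commute hx g).mpr hg)

end IsExtraspecial2Group

theorem isStronglyReal_quotient_of_forall {G : Type*} [Group G] {N : Subgroup G} [N.Normal]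
    (h : ∀ g, ∃ y, y * y ∈ N ∧ y * g * y⁻¹ * g ∈ N) : IsStronglyReal (G ⧸ N) := by
  intro q
  induction q using QuotientGroup.induction_on with | H g => ?_
  obtain ⟨y, hy, hyg⟩ := h g
  refine ⟨y, (QuotientGroup.eq_one_iff _).mpr hy, ?_⟩
  rwa [← QuotientGroup.mk_mul, ← QuotientGroup.mk_inv, ← QuotientGroup.mk_mul,
    ← QuotientGroup.mk_inv, QuotientGroup.eq_iff_div_mem, div_inv_eq_mul]

/-- Every extraspecial `2`-group other than `Q₈` is strongly real; in particular `D₄`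
and the central product `Q₈ ∘ D₄` are strongly real, while `Q₈` itself is not. -/
theorem extraspecial2Group_stronglyReal
    (N : Subgroup (QuaternionGroup 2 × DihedralGroup 4)) (hN : N.Normal)
    (hcar : (N : Set (QuaternionGroup 2 × DihedralGroup 4)) =
      {p | p.1 ∈ Subgroup.center (QuaternionGroup 2) ∧
           p.2 ∈ Subgroup.center (DihedralGroup 4) ∧ (p.1 = 1 ↔ p.2 = 1)}) :
    (∀ (G : Type) [Group G] [Finite G], IsExtraspecial2Group G →
      ¬ Nonempty (G ≃* QuaternionGroup 2) → IsStronglyReal G) ∧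
    IsStronglyReal (DihedralGroup 4) ∧
    IsStronglyReal ((QuaternionGroup 2 × DihedralGroup 4) ⧸ N) ∧
    ¬ IsStronglyReal (QuaternionGroup 2) := by
  refine ⟨fun G _ _ hE hQ => hE.isStronglyReal hQ, by unfold IsStronglyReal; decide,
    isStronglyReal_quotient_of_forall ?_, by unfold IsStronglyReal; decide⟩
  have hmem (p : QuaternionGroup 2 × DihedralGroup 4) : p ∈ N ↔
      p.1 ∈ center (QuaternionGroup 2) ∧ p.2 ∈ center (DihedralGroup 4) ∧ (p.1 = 1 ↔ p.2 = 1) := by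
    rw [← SetLike.mem_coe, hcar]; rfl
  simp only [hmem]
  decide
end
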